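/- The entropy H_n of the random-BST shape distribution on n nodes equals lg(n) + 2(n+1) Σ_{i=2}^{n-1} lg(i)/((i+2)(i+1)) for all n ≥ 2. -/

import Mathlib

open Filter Real

/-- Binary trees: empty (`leaf`) or a node with left and right subtrees. -/
inductive BinTree where
  | leaf : BinTree
  | node : BinTree → BinTree → BinTree
deriving DecidableEq, Repr

namespace BinTree

/-- Number of nodes. -/
def size : BinTree → ℕ
  | leaf => 0
  | node l r => l.size + r.size + 1

/-- Product of subtree sizes over all nodes: `∏_{v∈t} st(v)`. -/
def stProd : BinTree → ℕ
  | leaf => 1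
  | node l r => (node l r).size * l.stProd * r.stProd

/-- Subtree-size entropy: `H_st(t) = ∑_{v∈t} lg st(v)`. -/
noncomputable def stEntropy : BinTree → ℝ
  | leaf => 0
  | node l r => Real.logb 2 ((node l r).size : ℝ) + l.stEntropy + r.stEntropy

/-- Size of the left subtree of the root. -/
def leftSize : BinTree → ℕ
  | leaf => 0
  | node l _ => l.size

/-- Every node has at most one (nonempty) child. -/
def isPath : BinTree → Prop
  | leaf => True
  | node l r => (l = leaf ∨ r = leaf) ∧ l.isPath ∧ r.isPath

/-- At every node the sizes of the two subtrees differ by at most 1. -/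
def isBalanced : BinTree → Prop
  | leaf => True
  | node l r => ((l.size : ℤ) - (r.size : ℤ)).natAbs ≤ 1 ∧ l.isBalanced ∧ r.isBalanced

/-- Number of leaves (nodes with no children). -/
def leafCount : BinTree → ℕ
  | leaf => 0
  | node l r => (if l = leaf ∧ r = leaf then 1 else 0) + l.leafCount + r.leafCount

/-- Number of binary nodes (both children present). -/
def binCount : BinTree → ℕ
  | leaf => 0
  | node l r => (if l ≠ leaf ∧ r ≠ leaf then 1 else 0) + l.binCount + r.binCount

/-- Number of nodes with only a left child. -/
def leftOnlyCount : BinTree → ℕ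
  | leaf => 0
  | node l r => (if l ≠ leaf ∧ r = leaf then 1 else 0) + l.leftOnlyCount + r.leftOnlyCount

/-- Number of nodes with only a right child. -/
def rightOnlyCount : BinTree → ℕ
  | leaf => 0
  | node l r => (if l = leaf ∧ r ≠ leaf then 1 else 0) + l.rightOnlyCount + r.rightOnlyCount

end BinTree

/-- Cartesian tree construction with explicit fuel (fuel ≥ length suffices). -/
def cartesianAux : ℕ → List ℕ → BinTree
  | 0, _ => .leaf
  | _ + 1, [] => .leaf
  | fuel + 1, x :: xs =>
      let m := List.foldl min x xs
      let i := (x :: xs).idxOf m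
      .node (cartesianAux fuel ((x :: xs).take i)) (cartesianAux fuel ((x :: xs).drop (i + 1)))

/-- The Cartesian tree of a list: root at the (first) minimum, left/right
subtrees built recursively from the prefix/suffix. -/
def cartesian (l : List ℕ) : BinTree := cartesianAux l.length l

/-- The array `A[1..n]` (as a list) associated with a permutation of `Fin n`. -/
def permList {n : ℕ} (p : Equiv.Perm (Fin n)) : List ℕ := List.ofFn fun k => (p k : ℕ)

/-- All binary trees with exactly `n` nodes. -/
def treesOfSize : ℕ → Finset BinTree
  | 0 => {BinTree.leaf}
  | n + 1 =>
    (Finset.range (n + 1)).attach.biUnion fun i =>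
      ((treesOfSize i.1) ×ˢ (treesOfSize (n - i.1))).image fun p => BinTree.node p.1 p.2
termination_by n => n
decreasing_by
  · exact Nat.lt_succ_of_le (Nat.le_of_lt_succ (Finset.mem_range.mp i.2))
  · exact Nat.lt_succ_of_le (Nat.sub_le n i.1)

/-- Shannon entropy (base 2) of the random-BST shape distribution on `n` nodes,
which assigns probability `1/stProd t` to each tree `t` on `n` nodes. -/
noncomputable def shapeEntropy (n : ℕ) : ℝ :=
  - ∑ t ∈ treesOfSize n, (1 / (t.stProd : ℝ)) * Real.logb 2 (1 / (t.stProd : ℝ))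

/-- Expectation of `f` under the random-BST shape distribution on `n` nodes. -/
noncomputable def expCount (f : BinTree → ℕ) (n : ℕ) : ℝ :=
  ∑ t ∈ treesOfSize n, (1 / (t.stProd : ℝ)) * (f t : ℝ)

/-- The entropy recurrence: `H 0 = H 1 = 0`, `H n = lg n + (2/n) ∑_{i<n} H i`. -/
noncomputable def Hrec : ℕ → ℝ
  | 0 => 0
  | 1 => 0
  | n + 2 =>
      Real.logb 2 ((n + 2 : ℕ) : ℝ) +
        (2 / ((n + 2 : ℕ) : ℝ)) * ∑ i ∈ (Finset.range (n + 2)).attach, Hrec i.1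
termination_by n => n
decreasing_by exact Finset.mem_range.mp i.2

/-- `rmq_A(i,j)` (1-based): the position of the (first) minimum of `A[i..j]`. -/
def rmqFun (A : List ℕ) (i j : ℕ) : ℕ :=
  let s := (A.drop (i - 1)).take (j - i + 1)
  i + s.idxOf (List.foldl min (s.headD 0) s)

/-- The inorder rank of the LCA of the nodes with inorder ranks `i` and `j`. -/
def lcaInorder : BinTree → ℕ → ℕ → ℕ
  | .leaf, _, _ => 0
  | .node l r, i, j =>
      let m := l.size + 1
      if i < m ∧ j < m then lcaInorder l i j
      else if m < i ∧ m < j then m + lcaInorder r (i - m) (j - m)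
      else m

/-- The subtree rooted at the node reached from the root by the given
left(`false`)/right(`true`) directions, if it exists. -/
def subAt : BinTree → List Bool → Option BinTree
  | t, [] => some t
  | .leaf, _ :: _ => none
  | .node l _, false :: p => subAt l p
  | .node _ r, true :: p => subAt r p

/-- Subtree size of the node at a position (0 if there is no node there). -/
def stAt (t : BinTree) (pos : List Bool) : ℕ := ((subAt t pos).getD .leaf).size

/-- Left-subtree size of the node at a position. -/
def lsAt (t : BinTree) (pos : List Bool) : ℕ := ((subAt t pos).getD .leaf).leftSize

/-- `Pruned μ s`: `μ` is obtained from `s` by replacing some subtrees by `leaf`. -/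
inductive Pruned : BinTree → BinTree → Prop
  | leaf (t) : Pruned .leaf t
  | node {l' r' l r} : Pruned l' l → Pruned r' r → Pruned (.node l' r') (.node l r)

/-- `PrunedN k μ s`: `μ` is obtained from `s` by pruning exactly `k` (nonempty) subtrees. -/
inductive PrunedN : ℕ → BinTree → BinTree → Prop
  | refl (t) : PrunedN 0 t t
  | prune (l r) : PrunedN 1 .leaf (.node l r)
  | node {a b l' r' l r} : PrunedN a l' l → PrunedN b r' r → PrunedN (a + b) (.node l' r') (.node l r)

/-- `IsSubtree s t`: `s` is the subtree of `t` rooted at some node (or `t` itself). -/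
inductive IsSubtree : BinTree → BinTree → Prop
  | refl (t) : IsSubtree t t
  | left {s l r} : IsSubtree s l → IsSubtree s (.node l r)
  | right {s l r} : IsSubtree s r → IsSubtree s (.node l r)

/-- `∑_{v∈μ} lg st_s(v)`: sum over the nodes of `μ` of the log-subtree-sizes
taken in the host tree `s` (for `μ` pruned from `s`). -/
noncomputable def mixedEntropy : BinTree → BinTree → ℝ
  | .leaf, _ => 0
  | .node _ _, .leaf => 0
  | .node l' r', .node l r =>
      Real.logb 2 ((BinTree.node l r).size : ℝ) + mixedEntropy l' l + mixedEntropy r' r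

/-- 1-based preorder index of the node at a position (0 if no node there). -/
def preorderIdx : BinTree → List Bool → ℕ
  | _, [] => 1
  | .leaf, _ :: _ => 0
  | .node l _, false :: p => 1 + preorderIdx l p
  | .node l r, true :: p => 1 + l.size + preorderIdx r p

/-- 1-based inorder index of the node at a position. -/
def inorderIdx : BinTree → List Bool → ℕ
  | t, [] => t.leftSize + 1
  | .leaf, _ :: _ => 0
  | .node l _, false :: p => inorderIdx l p
  | .node l r, true :: p => l.size + 1 + inorderIdx r p

/-- Binary entropy function (base 2). -/
noncomputable def binH (x : ℝ) : ℝ := -x * Real.logb 2 x - (1 - x) * Real.logb 2 (1 - x)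

/-! Multiplying the recurrence by `n` and subtracting consecutive instances removes the full
history: `(n+1) H_{n+1} = (n+2) H_n + (n+1) lg (n+1) - n lg n`. Divided by `(n+1)(n+2)`, this
telescopes to the closed form; as `lg 1 = 0` and (in Lean) `lg 0 = 0`, the sum may run over
all `i < n`. -/

lemma Hrec_zero : Hrec 0 = 0 := by
  rw [Hrec]

lemma Hrec_one : Hrec 1 = 0 := by
  rw [Hrec]

lemma Hrec_add_two (n : ℕ) :
    Hrec (n + 2) = Real.logb 2 ((n + 2 : ℕ) : ℝ) +
      (2 / ((n + 2 : ℕ) : ℝ)) * ∑ i ∈ Finset.range (n + 2), Hrec i := by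
  rw [Hrec, Finset.sum_attach (Finset.range (n + 2)) Hrec]

lemma mul_Hrec (n : ℕ) :
    n * Hrec n = n * Real.logb 2 n + 2 * ∑ i ∈ Finset.range n, Hrec i := by
  match n with
  | 0 => simp
  | 1 => simp [Hrec_zero, Hrec_one]
  | n + 2 =>
    rw [Hrec_add_two]
    field_simp

lemma succ_mul_Hrec_succ (n : ℕ) :
    (n + 1) * Hrec (n + 1) =
      (n + 2) * Hrec n + (n + 1) * Real.logb 2 (n + 1) - n * Real.logb 2 n := by
  have h := mul_Hrec (n + 1)
  rw [Finset.sum_range_succ] at h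
  push_cast at h
  linarith [mul_Hrec n]

lemma Hrec_eq_sum_range (n : ℕ) :
    Hrec n = Real.logb 2 n +
      2 * (n + 1) * ∑ i ∈ Finset.range n, Real.logb 2 i / ((i + 2) * (i + 1)) := by
  induction n with
  | zero => simp [Hrec_zero]
  | succ n ih =>
    have h := succ_mul_Hrec_succ n
    rw [ih] at h
    rw [Finset.sum_range_succ]
    push_cast
    field_simp
    linear_combination (n + 2 : ℝ) * h

lemma sum_Icc_two_eq_sum_range {M : Type*} [AddCommMonoid M] (f : ℕ → M) (h0 : f 0 = 0)
    (h1 : f 1 = 0) (n : ℕ) : ∑ i ∈ Finset.Icc 2 (n - 1), f i = ∑ i ∈ Finset.range n, f i := by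
  refine Finset.sum_subset (fun i hi => ?_) (fun i hi hi' => ?_)
  · simp only [Finset.mem_Icc, Finset.mem_range] at hi ⊢
    omega
  · have hi01 : i = 0 ∨ i = 1 := by
      simp only [Finset.mem_Icc, Finset.mem_range] at hi hi'
      omega
    rcases hi01 with rfl | rfl
    exacts [h0, h1]

theorem stmt3_general (n : ℕ) :
    Hrec n = Real.logb 2 (n : ℝ) +
      2 * ((n : ℝ) + 1) *
        ∑ i ∈ Finset.Icc 2 (n - 1), Real.logb 2 (i : ℝ) / (((i : ℝ) + 2) * ((i : ℝ) + 1)) := by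
  rw [sum_Icc_two_eq_sum_range _ (by simp) (by simp)]
  exact Hrec_eq_sum_range n

/-- Exact solution of the entropy recurrence:
`H_n = lg n + 2(n+1) ∑_{i=2}^{n-1} lg i / ((i+2)(i+1))` for all `n ≥ 2`. -/
theorem stmt3 (n : ℕ) (hn : 2 ≤ n) :
    Hrec n = Real.logb 2 (n : ℝ) +
      2 * ((n : ℝ) + 1) *
        ∑ i ∈ Finset.Icc 2 (n - 1), Real.logb 2 (i : ℝ) / (((i : ℝ) + 2) * ((i : ℝ) + 1)) :=
  stmt3_general n
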